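/- Let P be a convex polytope that k-tiles ℝ^d with a discrete multiset Λ, let L be a lattice, and let a_1, …, a_n be vectors in ℝ^d such that the translates a_1 + L, …, a_n + L are pairwise disjoint. Let h ∈ ℝ^d be a fixed vector such that every line with direction vector h meets ∂P in finitely many points, and let P^h be the half-open counterpart of P. If Λ is equal (as a multiset, with every multiplicity one) to the disjoint union ⋃_{i=1}^n (a_i + L), then ∑_{i=1}^n L^h_L(v − a_i) = k for all v ∈ ℝ^d. -/

import Mathlib

open Set Pointwise

noncomputable section

abbrev Euc (d : ℕ) : Type := EuclideanSpace ℝ (Fin d)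

/-- A "discrete multiset" of vectors: a multiplicity function with locally finite support. -/
def IsDiscreteMultiset {d : ℕ} (m : Euc d → ℕ) : Prop :=
  ∀ x : Euc d, ∃ U ∈ nhds x, {y : Euc d | y ∈ U ∧ m y ≠ 0}.Finite

/-- `∑_{λ∈Λ} 1_{P+λ}(v)`, counted with multiplicity. -/
def coverCount {d : ℕ} (m : Euc d → ℕ) (P : Set (Euc d)) (v : Euc d) : ℕ :=
  ∑ᶠ l : Euc d, m l * P.indicator 1 (v - l)

/-- The set `∂P + Λ`. -/
def boundarySum {d : ℕ} (P : Set (Euc d)) (m : Euc d → ℕ) : Set (Euc d) :=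
  {x : Euc d | ∃ l : Euc d, m l ≠ 0 ∧ x - l ∈ frontier P}

/-- `P` `k`-tiles `ℝ^d` with the discrete multiset `m`: every point not in `∂P + Λ`
is covered exactly `k` times. -/
def Tiles {d : ℕ} (P : Set (Euc d)) (m : Euc d → ℕ) (k : ℕ) : Prop :=
  ∀ v : Euc d, v ∉ boundarySum P m → coverCount m P v = k

/-- A lattice in ℝ^d: a discrete additive subgroup of full rank, viewed as a set. -/
def IsLattice {d : ℕ} (L : Set (Euc d)) : Prop :=
  ∃ H : AddSubgroup (Euc d), L = (H : Set (Euc d)) ∧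
    DiscreteTopology H ∧ Submodule.span ℝ (H : Set (Euc d)) = ⊤

/-- A set viewed as a multiset with all multiplicities one. -/
def setMult {d : ℕ} (L : Set (Euc d)) : Euc d → ℕ := L.indicator 1

/-- A convex polytope: convex hull of a finite set of points, with nonempty interior. -/
def IsConvexPolytope {d : ℕ} (P : Set (Euc d)) : Prop :=
  (∃ S : Set (Euc d), S.Finite ∧ P = convexHull ℝ S) ∧ (interior P).Nonempty

/-- The half-open counterpart `P^h` of `P` with respect to the direction `h`. -/
def halfOpen {d : ℕ} (P : Set (Euc d)) (h : Euc d) : Set (Euc d) :=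
  {v : Euc d | v ∈ closure P ∧
    ∃ ε : ℝ, 0 < ε ∧ ∀ c : ℝ, 0 < c → c < ε → v + c • h ∈ interior P}

/-- Every line with direction `h` meets `∂P` in finitely many points. -/
def GoodDirection {d : ℕ} (P : Set (Euc d)) (h : Euc d) : Prop :=
  ∀ x : Euc d, {c : ℝ | x + c • h ∈ frontier P}.Finite

/-- `P^h` `k`-tiles `ℝ^d` with the discrete multiset `m`. -/
def TilesHalfOpen {d : ℕ} (P : Set (Euc d)) (h : Euc d) (m : Euc d → ℕ) (k : ℕ) : Prop :=
  ∀ v : Euc d, v ∉ boundarySum P m → coverCount m (halfOpen P h) v = k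

/-- `L_Λ(v) = #(Λ ∩ (−1·P + v))`, counted with multiplicity. -/
def LEnum {d : ℕ} (m : Euc d → ℕ) (P : Set (Euc d)) (v : Euc d) : ℕ :=
  ∑ᶠ l : Euc d, m l * Set.indicator (v +ᵥ ((-1 : ℝ) • P)) 1 l

/-- `L^h_Λ(v) = #(Λ ∩ (−1·P^h + v))`, counted with multiplicity. -/
def LEnumH {d : ℕ} (m : Euc d → ℕ) (P : Set (Euc d)) (h : Euc d) (v : Euc d) : ℕ :=
  LEnum m (halfOpen P h) v

/-!
Since `Λ` is the disjoint union of the translates `a i + L`, the sum `∑ i, L^h_L(v - a i)` is the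
number of `λ ∈ Λ` with `v - λ ∈ P^h`, i.e. the multiplicity with which `P^h + Λ` covers `v`.
Only finitely many `λ` are relevant, and for each of them the points `v - λ + c • h`, `0 < c < ε`,
avoid `∂P` (good direction), hence by connectedness lie all in `Int P` or all outside `P`,
according to whether `v - λ ∈ P^h`. So for a small `c > 0` the point `w = v + c • h` lies off
`∂P + Λ` and is covered by `P + Λ` exactly as often as `v` is by `P^h + Λ`; at `w` the tiling
hypothesis gives `k`.
-/

open Filter Topology Metric

lemma Set.indicator_one_eq_of_mem_iff {α β M : Type*} [Zero M] [One M] {s : Set α} {t : Set β}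
    {x : α} {y : β} (h : x ∈ s ↔ y ∈ t) : s.indicator (1 : α → M) x = t.indicator 1 y := by
  classical
  simp only [indicator_apply, h, Pi.one_apply]

namespace IsDiscreteMultiset

variable {d : ℕ} {m : Euc d → ℕ}

lemma finite_inter_compact (hm : IsDiscreteMultiset m) {K : Set (Euc d)} (hK : IsCompact K) :
    {l : Euc d | l ∈ K ∧ m l ≠ 0}.Finite := by
  choose U hU hfin using hm
  obtain ⟨t, -, hKt⟩ := hK.elim_nhds_subcover U fun x _ => hU x
  refine (t.finite_toSet.biUnion fun y _ => hfin y).subset ?_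
  rintro l ⟨hlK, hl⟩
  obtain ⟨y, hy, hly⟩ := mem_iUnion₂.1 (hKt hlK)
  exact mem_iUnion₂.2 ⟨y, hy, hly, hl⟩

lemma mono {m' : Euc d → ℕ} (hm : IsDiscreteMultiset m) (hle : m' ≤ m) :
    IsDiscreteMultiset m' := fun x => by
  obtain ⟨U, hU, hfin⟩ := hm x
  exact ⟨U, hU, hfin.subset fun l ⟨hlU, hl⟩ => ⟨hlU, fun h0 => hl (Nat.le_zero.1 (h0 ▸ hle l))⟩⟩

end IsDiscreteMultiset

section CoverCount

variable {d : ℕ}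

lemma support_coverCount_subset (m : Euc d → ℕ) {Q : Set (Euc d)} {M r : ℝ}
    (hQ : Q ⊆ closedBall 0 M) {v w : Euc d} (hw : dist w v ≤ r) :
    (Function.support fun l => m l * Q.indicator 1 (w - l)) ⊆
      {l | l ∈ closedBall v (M + r) ∧ m l ≠ 0} := by
  intro l hl
  have hl' : m l ≠ 0 ∧ w - l ∈ Q := by simpa [Set.indicator_apply] using hl
  have hwl : dist l w ≤ M := by
    simpa [dist_comm l, dist_eq_norm] using hQ hl'.2
  exact ⟨(dist_triangle l w v).trans (add_le_add hwl hw), hl'.1⟩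

lemma IsDiscreteMultiset.finite_support_coverCount {m : Euc d → ℕ} (hm : IsDiscreteMultiset m)
    {Q : Set (Euc d)} (hQ : Bornology.IsBounded Q) (v : Euc d) :
    (Function.support fun l => m l * Q.indicator 1 (v - l)).Finite := by
  obtain ⟨M, hM⟩ := hQ.subset_closedBall 0
  exact (hm.finite_inter_compact (isCompact_closedBall v (M + 0))).subset
    (support_coverCount_subset m hM (dist_self v).le)

lemma LEnum_eq_coverCount (m : Euc d → ℕ) (Q : Set (Euc d)) (v : Euc d) :
    LEnum m Q v = coverCount m Q v := by
  refine finsum_congr fun l => ?_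
  have hmem : l ∈ v +ᵥ (-1 : ℝ) • Q ↔ v - l ∈ Q := by
    rw [mem_vadd_set_iff_neg_vadd_mem, neg_smul_set, one_smul, Set.mem_neg, vadd_eq_add,
      neg_add_eq_sub, neg_sub]
  rw [indicator_one_eq_of_mem_iff hmem]

lemma coverCount_setMult_vadd (L Q : Set (Euc d)) (a v : Euc d) :
    coverCount (setMult (a +ᵥ L)) Q v = coverCount (setMult L) Q (v - a) := by
  rw [coverCount, ← finsum_comp_equiv (Equiv.addLeft a)]
  refine finsum_congr fun l => ?_
  have hmem : a + l ∈ a +ᵥ L ↔ l ∈ L := vadd_mem_vadd_set_iff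
  rw [Equiv.coe_addLeft, setMult, setMult, indicator_one_eq_of_mem_iff hmem, sub_add_eq_sub_sub]

lemma sum_coverCount {ι : Type*} (s : Finset ι) (m : ι → Euc d → ℕ) (Q : Set (Euc d)) (v : Euc d)
    (hfin : ∀ i ∈ s, (Function.support fun l => m i l * Q.indicator 1 (v - l)).Finite) :
    ∑ i ∈ s, coverCount (m i) Q v = coverCount (∑ i ∈ s, m i) Q v := by
  simp only [coverCount, Finset.sum_apply, Finset.sum_mul]
  exact (finsum_sum_comm s _ hfin).symm

lemma setMult_mono {s t : Set (Euc d)} (hst : s ⊆ t) : setMult s ≤ setMult t :=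
  indicator_le_indicator_of_subset hst fun _ => zero_le_one

lemma setMult_iUnion {ι : Type*} [Fintype ι] (t : ι → Set (Euc d))
    (ht : Pairwise (Function.onFun Disjoint t)) : setMult (⋃ i, t i) = ∑ i, setMult (t i) := by
  funext x
  simpa [setMult, Finset.sum_apply] using
    Finset.indicator_biUnion_apply Finset.univ t (fun i _ j _ hij => ht hij) x

end CoverCount

section HalfOpen

variable {d : ℕ} {P : Set (Euc d)} {h : Euc d}

lemma IsConvexPolytope.isCompact (hP : IsConvexPolytope P) : IsCompact P := by
  obtain ⟨⟨S, hS, rfl⟩, -⟩ := hP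
  exact hS.isCompact_convexHull (𝕜 := ℝ)

lemma halfOpen_subset (hP : IsClosed P) : halfOpen P h ⊆ P := fun _ hx => hP.closure_eq ▸ hx.1

lemma GoodDirection.eventually_mem_halfOpen_iff (hdir : GoodDirection P h) (x : Euc d) :
    ∀ᶠ c in 𝓝[>] (0 : ℝ), x + c • h ∉ frontier P ∧ (x ∈ halfOpen P h ↔ x + c • h ∈ P) := by
  have hF : ∀ᶠ c in 𝓝[>] (0 : ℝ), x + c • h ∉ frontier P :=
    nhdsGT_le_nhdsNE 0 (nhdsNE_le_cofinite 0 (hdir x).eventually_cofinite_notMem)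
  obtain ⟨ε, hε, hsub⟩ := mem_nhdsGT_iff_exists_Ioo_subset.1 hF
  set γ : ℝ → Euc d := fun c => x + c • h
  have hγ : Continuous γ := by fun_prop
  have hsplit : γ '' Ioo 0 ε ⊆ interior P ∪ (closure P)ᶜ := by
    rintro _ ⟨c, hc, rfl⟩
    by_cases hcl : γ c ∈ closure P
    · exact Or.inl (by_contra fun hint => hsub hc ⟨hcl, hint⟩)
    · exact Or.inr hcl
  rcases (isPreconnected_Ioo.image γ hγ.continuousOn).subset_or_subset isOpen_interior
    isClosed_closure.isOpen_compl (disjoint_compl_right_iff_subset.2 interior_subset_closure)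
    hsplit with hint | hout
  · have hγx : Tendsto γ (𝓝[>] 0) (𝓝 x) :=
      (hγ.tendsto' 0 x (by simp [γ])).mono_left nhdsWithin_le_nhds
    have hγP : ∀ᶠ c in 𝓝[>] 0, γ c ∈ P := by
      filter_upwards [Ioo_mem_nhdsGT hε] with c hc
      exact interior_subset (hint ⟨c, hc, rfl⟩)
    have hx : x ∈ halfOpen P h :=
      ⟨mem_closure_of_tendsto hγx hγP, ε, hε, fun c h0 h1 => hint ⟨c, ⟨h0, h1⟩, rfl⟩⟩
    filter_upwards [Ioo_mem_nhdsGT hε] with c hc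
    exact ⟨hsub hc, iff_of_true hx (interior_subset (hint ⟨c, hc, rfl⟩))⟩
  · have hx : x ∉ halfOpen P h := by
      rintro ⟨-, ε', hε', hε'int⟩
      obtain ⟨c, hc, hc'⟩ := Filter.nonempty_of_mem
        (Filter.inter_mem (Ioo_mem_nhdsGT hε) (Ioo_mem_nhdsGT hε'))
      exact hout ⟨c, hc, rfl⟩ (interior_subset_closure (hε'int c hc'.1 hc'.2))
    filter_upwards [Ioo_mem_nhdsGT hε] with c hc
    exact ⟨hsub hc, iff_of_false hx fun hP => hout ⟨c, hc, rfl⟩ (subset_closure hP)⟩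

theorem Tiles.coverCount_halfOpen {m : Euc d → ℕ} {k : ℕ} (hT : Tiles P m k) (hPc : IsCompact P)
    (hm : IsDiscreteMultiset m) (hdir : GoodDirection P h) (v : Euc d) :
    coverCount m (halfOpen P h) v = k := by
  obtain ⟨M, hM⟩ := hPc.isBounded.subset_closedBall 0
  have hS := hm.finite_inter_compact (isCompact_closedBall v (M + 1))
  set S := hS.toFinset
  have hnear : ∀ᶠ c in 𝓝[>] (0 : ℝ), dist (v + c • h) v ≤ 1 :=
    nhdsWithin_le_nhds <| ((by fun_prop : Continuous fun c : ℝ => v + c • h).tendsto' 0 v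
      (by simp)).eventually (closedBall_mem_nhds v one_pos)
  have hgood := (eventually_all_finset S).2 fun l _ => hdir.eventually_mem_halfOpen_iff (v - l)
  obtain ⟨c, hcv, hcS⟩ := (hnear.and hgood).exists
  set w := v + c • h
  have hw : ∀ l, w - l = v - l + c • h := fun l => by simp only [w]; abel
  have hsuppP := support_coverCount_subset m hM hcv
  have hsuppH := support_coverCount_subset m ((halfOpen_subset (h := h) hPc.isClosed).trans hM)
    (by simp : dist v v ≤ 1)
  have hwP : w ∉ boundarySum P m := by
    rintro ⟨l, hl, hfr⟩
    have hlS : l ∈ S := hS.mem_toFinset.2 (hsuppP (by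
      simp [hl, hPc.isClosed.frontier_subset hfr]))
    exact (hcS l hlS).1 (hw l ▸ hfr)
  calc coverCount m (halfOpen P h) v
      = ∑ l ∈ S, m l * (halfOpen P h).indicator 1 (v - l) :=
        finsum_eq_sum_of_support_subset _ (by simpa [S] using hsuppH)
    _ = ∑ l ∈ S, m l * P.indicator 1 (w - l) := Finset.sum_congr rfl fun l hl => by
        rw [indicator_one_eq_of_mem_iff (hcS l hl).2, hw]
    _ = coverCount m P w := (finsum_eq_sum_of_support_subset _ (by simpa [S] using hsuppP)).symm
    _ = k := hT w hwP

end HalfOpen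

theorem stmt_10_general {d n : ℕ} (P : Set (Euc d)) (hP : IsConvexPolytope P)
    (h : Euc d) (hdir : GoodDirection P h)
    (k : ℕ) (Λ : Euc d → ℕ) (hΛ : IsDiscreteMultiset Λ)
    (hTile : Tiles P Λ k)
    (L : Set (Euc d)) (a : Fin n → Euc d)
    (hdisj : ∀ i j : Fin n, i ≠ j → Disjoint (a i +ᵥ L) (a j +ᵥ L))
    (heq : Λ = setMult (⋃ i, (a i +ᵥ L))) :
    ∀ v : Euc d, ∑ i, LEnumH (setMult L) P h (v - a i) = k := by
  intro v
  have hPc := hP.isCompact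
  have hfin (i : Fin n) (_ : i ∈ Finset.univ) := (hΛ.mono (heq ▸ setMult_mono (subset_iUnion _ i)))
    |>.finite_support_coverCount (hPc.isBounded.subset (halfOpen_subset (h := h) hPc.isClosed)) v
  calc ∑ i, LEnumH (setMult L) P h (v - a i)
      = ∑ i, coverCount (setMult (a i +ᵥ L)) (halfOpen P h) v := by
        simp only [LEnumH, LEnum_eq_coverCount, coverCount_setMult_vadd]
    _ = coverCount Λ (halfOpen P h) v := by
        rw [sum_coverCount _ _ _ _ hfin, heq, setMult_iUnion _ hdisj]
    _ = k := hTile.coverCount_halfOpen hPc hΛ hdir v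

/-- If `P` `k`-tiles ℝ^d with Λ and Λ is exactly the disjoint union of
the translated lattices `a i + L` (each with multiplicity one), then
`∑ i, L^h_L(v - a i) = k` for all `v`. -/
theorem stmt_10 {d n : ℕ} (P : Set (Euc d)) (hP : IsConvexPolytope P)
    (h : Euc d) (hdir : GoodDirection P h)
    (k : ℕ) (hk : 0 < k) (Λ : Euc d → ℕ) (hΛ : IsDiscreteMultiset Λ)
    (hTile : Tiles P Λ k)
    (L : Set (Euc d)) (hL : IsLattice L) (a : Fin n → Euc d)
    (hdisj : ∀ i j : Fin n, i ≠ j → Disjoint (a i +ᵥ L) (a j +ᵥ L))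
    (heq : Λ = setMult (⋃ i, (a i +ᵥ L))) :
    ∀ v : Euc d, ∑ i, LEnumH (setMult L) P h (v - a i) = k :=
  stmt_10_general P hP h hdir k Λ hΛ hTile L a hdisj heq
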